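/- In any crowdfunding game Γ(n,B,μ,p,τ) with a cheap price (τ < p_l), the strategy pair (λ,ψ) = (1,1) is a symmetric non-trivial Bayes–Nash equilibrium, and it is the unique symmetric non-trivial Bayes–Nash equilibrium of the game. -/
import Mathlib


open Finset Filter

/-- Upper tail of a Binomial(m,γ): probability of at least `k` successes in `m` trials. -/
noncomputable def phi (γ : ℝ) (m k : ℕ) : ℝ :=
  ∑ j ∈ Finset.Icc k m, (m.choose j : ℝ) * γ ^ j * (1 - γ) ^ (m - j)

/-- Posterior probability of state H given a low signal. -/
noncomputable def pLow (μ p : ℝ) : ℝ := (1 - p) * μ / ((1 - p) * μ + p * (1 - μ))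

/-- Posterior probability of state H given a high signal. -/
noncomputable def pHigh (μ p : ℝ) : ℝ := p * μ / (p * μ + (1 - p) * (1 - μ))

/-- Probability that a player contributes in state H under symmetric strategy (lam, psi). -/
noncomputable def alphaH (p lam psi : ℝ) : ℝ := p * psi + (1 - p) * lam

/-- Probability that a player contributes in state L under symmetric strategy (lam, psi). -/
noncomputable def alphaL (p lam psi : ℝ) : ℝ := (1 - p) * psi + p * lam

/-- Expected utility of contributing for a low-signal player. -/
noncomputable def Ulow (n B : ℕ) (μ p τ lam psi : ℝ) : ℝ :=
  pLow μ p * (1 - τ) * phi (alphaH p lam psi) (n - 1) (B - 1)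
    - (1 - pLow μ p) * τ * phi (alphaL p lam psi) (n - 1) (B - 1)

/-- Expected utility of contributing for a high-signal player. -/
noncomputable def Uhigh (n B : ℕ) (μ p τ lam psi : ℝ) : ℝ :=
  pHigh μ p * (1 - τ) * phi (alphaH p lam psi) (n - 1) (B - 1)
    - (1 - pHigh μ p) * τ * phi (alphaL p lam psi) (n - 1) (B - 1)

/-- (lam, psi) is a symmetric Bayes–Nash equilibrium of Γ(n,B,μ,p,τ). -/
def IsSymmEq (n B : ℕ) (μ p τ lam psi : ℝ) : Prop :=
  lam ∈ Set.Icc (0:ℝ) 1 ∧ psi ∈ Set.Icc (0:ℝ) 1 ∧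
    (0 < lam → 0 ≤ Ulow n B μ p τ lam psi) ∧
    (lam < 1 → Ulow n B μ p τ lam psi ≤ 0) ∧
    (0 < psi → 0 ≤ Uhigh n B μ p τ lam psi) ∧
    (psi < 1 → Uhigh n B μ p τ lam psi ≤ 0)

/-- The strategy profile (lam, psi) is non-trivial: the good is supplied with
positive probability. -/
def NonTrivial (n B : ℕ) (μ p lam psi : ℝ) : Prop :=
  0 < μ * phi (alphaH p lam psi) n B + (1 - μ) * phi (alphaL p lam psi) n B

/-- The correctness index of Γ(n,B,μ,p,τ) at the symmetric strategy (lam, psi). -/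
noncomputable def thetaIdx (n B : ℕ) (μ p lam psi : ℝ) : ℝ :=
  μ * phi (alphaH p lam psi) n B + (1 - μ) * (1 - phi (alphaL p lam psi) n B)

/-- Expected fraction of contributors collected from a Binomial(n,γ) number of
contributors, counted only when the threshold B is met. -/
noncomputable def tailExp (γ : ℝ) (n B : ℕ) : ℝ :=
  ∑ j ∈ Finset.Icc B n, ((j : ℝ) / n) * (n.choose j : ℝ) * γ ^ j * (1 - γ) ^ (n - j)

/-- The participation index of Γ(n,B,μ,p,τ) at the symmetric strategy (lam, psi). -/
noncomputable def partIdx (n B : ℕ) (μ p lam psi : ℝ) : ℝ :=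
  μ * tailExp (alphaH p lam psi) n B + (1 - μ) * tailExp (alphaL p lam psi) n B

lemma phi_nonneg {γ : ℝ} (h0 : 0 ≤ γ) (h1 : γ ≤ 1) (m k : ℕ) : 0 ≤ phi γ m k := by
  apply Finset.sum_nonneg
  intro j _
  have : (0:ℝ) ≤ 1 - γ := by linarith
  positivity

lemma phi_k_zero (γ : ℝ) (m : ℕ) : phi γ m 0 = 1 := by
  have hIcc : Finset.Icc 0 m = Finset.range (m+1) := by
    ext x; simp [Nat.lt_succ_iff]
  have h : phi γ m 0 = (γ + (1 - γ)) ^ m := by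
    rw [add_pow, phi, hIcc]
    exact Finset.sum_congr rfl (fun j _ => by ring)
  rw [h]
  norm_num

lemma phi_of_gt {γ : ℝ} {m k : ℕ} (h : m < k) : phi γ m k = 0 := by
  rw [phi, Finset.Icc_eq_empty (by omega), Finset.sum_empty]

lemma phi_one {m k : ℕ} (hk : k ≤ m) : phi (1:ℝ) m k = 1 := by
  rw [phi, Finset.sum_eq_single m]
  · simp
  · intro j hj hjm
    have hj2 : j < m := lt_of_le_of_ne (Finset.mem_Icc.mp hj).2 hjm
    have hne : m - j ≠ 0 := by omega
    simp [hne]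
  · intro h; exact absurd (Finset.mem_Icc.mpr ⟨hk, le_rfl⟩) h

lemma phi_zero' {m k : ℕ} (hk : 1 ≤ k) : phi (0:ℝ) m k = 0 := by
  rw [phi]
  apply Finset.sum_eq_zero
  intro j hj
  have : j ≠ 0 := by have := (Finset.mem_Icc.mp hj).1; omega
  simp [zero_pow this]

lemma phi_pos {γ : ℝ} (h0 : 0 < γ) (h1 : γ ≤ 1) {m k : ℕ} (hk : k ≤ m) : 0 < phi γ m k := by
  have hterm : (0:ℝ) < (m.choose m : ℝ) * γ ^ m * (1 - γ) ^ (m - m) := by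
    simp [Nat.choose_self]
    positivity
  refine lt_of_lt_of_le hterm ?_
  apply Finset.single_le_sum (f := fun j => (m.choose j : ℝ) * γ ^ j * (1-γ)^(m-j))
    ?_ (Finset.mem_Icc.mpr ⟨hk, le_rfl⟩)
  intro j _
  have : (0:ℝ) ≤ 1 - γ := by linarith
  positivity

lemma phi_anti {γ : ℝ} (h0 : 0 ≤ γ) (h1 : γ ≤ 1) {m k l : ℕ} (hkl : k ≤ l) :
    phi γ m l ≤ phi γ m k := by
  apply Finset.sum_le_sum_of_subset_of_nonneg (Finset.Icc_subset_Icc_left hkl)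
  intro j _ _
  have : (0:ℝ) ≤ 1 - γ := by linarith
  positivity

lemma phi_eq_range (γ : ℝ) (m k : ℕ) :
    phi γ m k = ∑ i ∈ Finset.range (m + 1 - k),
      (m.choose (k+i) : ℝ) * γ ^ (k+i) * (1-γ) ^ (m-k-i) := by
  rw [phi, ← Finset.Ico_add_one_right_eq_Icc, Finset.sum_Ico_eq_sum_range]
  exact Finset.sum_congr rfl (fun i _ => by rw [Nat.sub_sub])

lemma phi_succ (γ : ℝ) (m k : ℕ) :
    phi γ (m+1) (k+1) = γ * phi γ m k + (1-γ) * phi γ m (k+1) := by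
  rcases le_or_gt k m with hk | hk
  · rw [phi_eq_range, phi_eq_range, phi_eq_range]
    have h1 : m + 1 + 1 - (k+1) = (m - k) + 1 := by omega
    have h2 : m + 1 - (k+1) = m - k := by omega
    have h3 : m + 1 - k = (m - k) + 1 := by omega
    rw [h1, h2, h3, Finset.mul_sum, Finset.mul_sum, Finset.sum_range_succ,
      Finset.sum_range_succ (n := m - k)]
    have hbd : ((m+1).choose (k+1+(m-k)) : ℝ) * γ ^ (k+1+(m-k)) * (1-γ) ^ (m-k-(m-k))
        = γ * ((m.choose (k+(m-k)) : ℝ) * γ ^ (k+(m-k)) * (1-γ) ^ (m-k-(m-k))) := by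
      have e1 : k+1+(m-k) = m+1 := by omega
      have e2 : k+(m-k) = m := by omega
      have e4 : m-k-(m-k) = 0 := by omega
      rw [e1, e2, e4, Nat.choose_self, Nat.choose_self]
      push_cast; ring
    rw [hbd]
    have hsum : ∑ x ∈ Finset.range (m-k), ((m+1).choose (k+1+x) : ℝ) * γ ^ (k+1+x) * (1-γ) ^ (m-k-x)
        = ∑ x ∈ Finset.range (m-k), (γ * ((m.choose (k+x) : ℝ) * γ ^ (k+x) * (1-γ) ^ (m-k-x))
          + (1-γ) * ((m.choose (k+1+x) : ℝ) * γ ^ (k+1+x) * (1-γ) ^ (m-(k+1)-x))) := by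
      apply Finset.sum_congr rfl
      intro i hi
      have hi' : i < m - k := Finset.mem_range.mp hi
      have e1 : k+1+i = (k+i)+1 := by omega
      have e2 : m - k - i = (m - (k+1) - i) + 1 := by omega
      rw [e1, Nat.choose_succ_succ, e2]
      push_cast
      ring
    rw [Finset.sum_add_distrib] at hsum
    linarith [hsum]
  · rw [phi_of_gt (by omega), phi_of_gt (by omega), phi_of_gt (by omega)]
    ring

lemma phi_mono {a b : ℝ} (ha : 0 ≤ a) (hab : a ≤ b) (hb : b ≤ 1) (m k : ℕ) :
    phi a m k ≤ phi b m k := by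
  induction m generalizing k with
  | zero =>
    match k with
    | 0 => rw [phi_k_zero, phi_k_zero]
    | k+1 => rw [phi_of_gt (by omega), phi_of_gt (by omega)]
  | succ m ih =>
    match k with
    | 0 => rw [phi_k_zero, phi_k_zero]
    | k+1 =>
      rw [phi_succ, phi_succ]
      have ha1 : a ≤ 1 := le_trans hab hb
      have hb0 : 0 ≤ b := le_trans ha hab
      have h1 := ih k
      have h2 := ih (k+1)
      have h3 := phi_anti ha ha1 (Nat.le_succ k) (m := m)
      nlinarith [phi_nonneg ha ha1 m k, phi_nonneg ha ha1 m (k+1)]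

/-- with a cheap price, everyone contributing is the unique
symmetric non-trivial Bayes–Nash equilibrium. -/
theorem stmt6 (n B : ℕ) (μ p τ : ℝ) (hn : 1 ≤ n) (hB1 : 1 ≤ B) (hB2 : B ≤ n)
    (hμ : μ ∈ Set.Ioo (0:ℝ) 1) (hp : p ∈ Set.Ioo (1/2 : ℝ) 1) (hτ : τ ∈ Set.Ioo (0:ℝ) 1)
    (hcheap : τ < pLow μ p) :
    (IsSymmEq n B μ p τ 1 1 ∧ NonTrivial n B μ p 1 1) ∧
    (∀ lam psi, IsSymmEq n B μ p τ lam psi → NonTrivial n B μ p lam psi →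
      lam = 1 ∧ psi = 1) := by
  obtain ⟨hμ0, hμ1⟩ := hμ
  obtain ⟨hp0, hp1⟩ := hp
  obtain ⟨hτ0, hτ1⟩ := hτ
  have hBn : B - 1 ≤ n - 1 := by omega
  have hμ1' : (0:ℝ) < 1 - μ := by linarith
  have hp' : (0:ℝ) < p := by linarith
  have hq' : (0:ℝ) < 1 - p := by linarith
  have hDl : 0 < (1 - p) * μ + p * (1 - μ) := by
    linarith [mul_pos hq' hμ0, mul_pos hp' hμ1']
  have hDh : 0 < p * μ + (1 - p) * (1 - μ) := by
    linarith [mul_pos hp' hμ0, mul_pos hq' hμ1']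
  have hpl_pos : 0 < pLow μ p := div_pos (mul_pos hq' hμ0) hDl
  have hpl_lt1 : pLow μ p < 1 := by
    rw [pLow, div_lt_one hDl]; linarith [mul_pos hp' hμ1']
  have hph_pos : 0 < pHigh μ p := div_pos (mul_pos hp' hμ0) hDh
  have hph_lt1 : pHigh μ p < 1 := by
    rw [pHigh, div_lt_one hDh]; linarith [mul_pos hq' hμ1']
  have hplh : pLow μ p < pHigh μ p := by
    rw [pLow, pHigh, div_lt_div_iff₀ hDl hDh]
    linarith [mul_pos (mul_pos hμ0 hμ1') (show (0:ℝ) < 2*p-1 by linarith)]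
  have hτph : τ < pHigh μ p := lt_trans hcheap hplh
  have hαH1 : alphaH p 1 1 = 1 := by unfold alphaH; ring
  have hαL1 : alphaL p 1 1 = 1 := by unfold alphaL; ring
  have hUl1 : Ulow n B μ p τ 1 1 = pLow μ p - τ := by
    unfold Ulow; rw [hαH1, hαL1, phi_one hBn]; ring
  have hUh1 : Uhigh n B μ p τ 1 1 = pHigh μ p - τ := by
    unfold Uhigh; rw [hαH1, hαL1, phi_one hBn]; ring
  constructor
  · refine ⟨⟨⟨le_of_lt one_pos, le_refl 1⟩, ⟨le_of_lt one_pos, le_refl 1⟩,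
      fun _ => by rw [hUl1]; linarith,
      fun h => absurd h (lt_irrefl 1),
      fun _ => by rw [hUh1]; linarith,
      fun h => absurd h (lt_irrefl 1)⟩, ?_⟩
    unfold NonTrivial
    rw [hαH1, hαL1, phi_one hB2]
    linarith
  · rintro lam psi ⟨⟨hl0, hl1⟩, ⟨hs0, hs1⟩, hUl_p, hUl_n, hUh_p, hUh_n⟩ hnt
    obtain ⟨aH, haH⟩ : ∃ x, alphaH p lam psi = x := ⟨_, rfl⟩
    obtain ⟨aL, haL⟩ : ∃ x, alphaL p lam psi = x := ⟨_, rfl⟩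
    simp only [Ulow, Uhigh, haH, haL] at hUl_p hUl_n hUh_p hUh_n
    simp only [NonTrivial, haH, haL] at hnt
    simp only [alphaH] at haH
    simp only [alphaL] at haL
    have haH0 : 0 ≤ aH := by
      rw [← haH]
      linarith [mul_nonneg hp'.le hs0, mul_nonneg hq'.le hl0]
    have haH1 : aH ≤ 1 := by
      rw [← haH]
      linarith [mul_le_mul_of_nonneg_left hs1 hp'.le,
        mul_le_mul_of_nonneg_left hl1 hq'.le]
    have haL0 : 0 ≤ aL := by
      rw [← haL]
      linarith [mul_nonneg hq'.le hs0, mul_nonneg hp'.le hl0]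
    have haL1 : aL ≤ 1 := by
      rw [← haL]
      linarith [mul_le_mul_of_nonneg_left hs1 hq'.le,
        mul_le_mul_of_nonneg_left hl1 hp'.le]
    have hpos : 0 < lam ∨ 0 < psi := by
      by_contra h
      push_neg at h
      have hl : lam = 0 := le_antisymm h.1 hl0
      have hs : psi = 0 := le_antisymm h.2 hs0
      have h1 : aH = 0 := by rw [← haH, hl, hs]; ring
      have h2 : aL = 0 := by rw [← haL, hl, hs]; ring
      rw [h1, h2, phi_zero' hB1] at hnt
      linarith
    have haH_pos : 0 < aH := by
      rw [← haH]
      rcases hpos with h | h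
      · linarith [mul_pos hq' h, mul_nonneg hp'.le hs0]
      · linarith [mul_pos hp' h, mul_nonneg hq'.le hl0]
    have hPH_pos : 0 < phi aH (n-1) (B-1) := phi_pos haH_pos haH1 hBn
    have hPL_nn : 0 ≤ phi aL (n-1) (B-1) := phi_nonneg haL0 haL1 (n-1) (B-1)
    have hpsi1 : psi = 1 := by
      by_contra hpsi
      have hpsilt : psi < 1 := lt_of_le_of_ne hs1 hpsi
      have hUh := hUh_n hpsilt
      have hlam0 : lam = 0 := by
        by_contra hlam
        have hlam_pos : 0 < lam := lt_of_le_of_ne hl0 (Ne.symm hlam)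
        have hUl := hUl_p hlam_pos
        have hfac : 0 < (pHigh μ p - pLow μ p)
            * ((1-τ) * phi aH (n-1) (B-1) + τ * phi aL (n-1) (B-1)) := by
          apply mul_pos (by linarith)
          have h1 : 0 < (1-τ) * phi aH (n-1) (B-1) := mul_pos (by linarith) hPH_pos
          have h2 : 0 ≤ τ * phi aL (n-1) (B-1) := mul_nonneg hτ0.le hPL_nn
          linarith
        linarith
      have hLH : aL ≤ aH := by
        rw [← haH, ← haL, hlam0]
        linarith [mul_le_mul_of_nonneg_right (show 1-p ≤ p by linarith) hs0]
      have hmono : phi aL (n-1) (B-1) ≤ phi aH (n-1) (B-1) :=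
        phi_mono haL0 hLH haH1 (n-1) (B-1)
      have hA : 0 ≤ (1 - pHigh μ p) * τ * (phi aH (n-1) (B-1) - phi aL (n-1) (B-1)) :=
        mul_nonneg (mul_nonneg (by linarith) hτ0.le) (by linarith)
      have hC : 0 < (pHigh μ p - τ) * phi aH (n-1) (B-1) :=
        mul_pos (by linarith) hPH_pos
      linarith
    have hlam1 : lam = 1 := by
      by_contra hlam
      have hlamlt : lam < 1 := lt_of_le_of_ne hl1 hlam
      have hUl := hUl_n hlamlt
      have hLH : aL ≤ aH := by
        rw [← haH, ← haL, hpsi1]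
        linarith [mul_le_mul_of_nonneg_left hl1 (show (0:ℝ) ≤ 2*p-1 by linarith)]
      have hmono : phi aL (n-1) (B-1) ≤ phi aH (n-1) (B-1) :=
        phi_mono haL0 hLH haH1 (n-1) (B-1)
      have hA : 0 ≤ (1 - pLow μ p) * τ * (phi aH (n-1) (B-1) - phi aL (n-1) (B-1)) :=
        mul_nonneg (mul_nonneg (by linarith) hτ0.le) (by linarith)
      have hC : 0 < (pLow μ p - τ) * phi aH (n-1) (B-1) :=
        mul_pos (by linarith) hPH_pos
      linarith
    exact ⟨hlam1, hpsi1⟩
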